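/- arXiv:2011.08915 — 2 statements merged into one kernel-verified Lean document; each statement's English description precedes it below -/
import Mathlib

section
/- Let G be a finite group of order 2n with n ≥ 2 and S a generating set such that the undirected Cayley graph Γ(G,S) is complete bipartite (i.e., there is an index-2 subgroup H with S = G \ H). Then Player 2 has a winning strategy for REL(G,S). -/
namespace RelatorGames

variable {G : Type*} [Group G]

/-- The letters available in the relator games: elements of `S` and their inverses. -/
def letters (S : Set G) : Set G := S ∪ (fun g => g⁻¹) '' S

/-- Evaluate a history of moves (most recent letter first) to a group element:
the group element represented by the word built so far. -/
def eval (h : List G) : G := h.reverse.prod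

/-- A move `m` is legal after history `h`: it is a letter of `S ∪ S⁻¹` and it is not
the inverse of the immediately preceding letter (no backtracking). -/
def LegalMove (S : Set G) (h : List G) (m : G) : Prop :=
  m ∈ letters S ∧ ∀ p ∈ h.head?, m ≠ p⁻¹

/-- Appending `m` to the history `h` produces a word equal in `G` to some earlier
prefix of the word (equivalently, the walk in the Cayley graph revisits a vertex). -/
def ClosesCycle (h : List G) (m : G) : Prop :=
  ∃ t, t <:+ h ∧ eval t = eval (m :: h)

/-- A strategy: a choice of next letter given the history (most recent letter first). -/
abbrev Strategy (G : Type*) := List G → G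

/-- The sequence of histories arising when the first player (moving at even steps)
uses `σ` and the second player (moving at odd steps) uses `τ`. -/
def hist (σ τ : Strategy G) : ℕ → List G
  | 0 => []
  | k + 1 =>
      (if k % 2 = 0 then σ (hist σ τ k) else τ (hist σ τ k)) :: hist σ τ k

/-- The move made at step `k` in the play of `σ` against `τ`. -/
def moveAt (σ τ : Strategy G) (k : ℕ) : G :=
  if k % 2 = 0 then σ (hist σ τ k) else τ (hist σ τ k)

/-- Step `j` is uneventful: the move made is legal and does not close a cycle. -/
def Ok (S : Set G) (σ τ : Strategy G) (j : ℕ) : Prop :=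
  LegalMove S (hist σ τ j) (moveAt σ τ j) ∧ ¬ ClosesCycle (hist σ τ j) (moveAt σ τ j)

/-- In the play of `σ` against `τ`, the player moving at steps congruent to `p` mod 2
wins the relator achievement game `REL(G,S)`: at the first eventful step, either it is
that player's turn and they legally close a cycle, or it is the opponent's turn and the
opponent has made an illegal move (in particular, has no legal move). -/
def RelWins (S : Set G) (p : ℕ) (σ τ : Strategy G) : Prop :=
  ∃ k : ℕ, (∀ j < k, Ok S σ τ j) ∧
    ((k % 2 = p ∧ LegalMove S (hist σ τ k) (moveAt σ τ k) ∧
        ClosesCycle (hist σ τ k) (moveAt σ τ k)) ∨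
      (k % 2 ≠ p ∧ ¬ LegalMove S (hist σ τ k) (moveAt σ τ k)))

/-- In the play of `σ` against `τ`, the player moving at steps congruent to `p` mod 2
wins the relator avoidance game `RAV(G,S)`: at the first eventful step it is the
opponent's turn, and the opponent either makes an illegal move (in particular, has no
legal move) or closes a cycle. -/
def RavWins (S : Set G) (p : ℕ) (σ τ : Strategy G) : Prop :=
  ∃ k : ℕ, (∀ j < k, Ok S σ τ j) ∧ k % 2 ≠ p ∧
    (¬ LegalMove S (hist σ τ k) (moveAt σ τ k) ∨ ClosesCycle (hist σ τ k) (moveAt σ τ k))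

/-- Player 1 has a winning strategy for `REL(G,S)`. -/
def FirstWinsREL (S : Set G) : Prop :=
  ∃ σ : Strategy G, ∀ τ : Strategy G, RelWins S 0 σ τ

/-- Player 2 has a winning strategy for `REL(G,S)`. -/
def SecondWinsREL (S : Set G) : Prop :=
  ∃ τ : Strategy G, ∀ σ : Strategy G, RelWins S 1 σ τ

/-- Player 1 has a winning strategy for `RAV(G,S)`. -/
def FirstWinsRAV (S : Set G) : Prop :=
  ∃ σ : Strategy G, ∀ τ : Strategy G, RavWins S 0 σ τ

/-- Player 2 has a winning strategy for `RAV(G,S)`. -/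
def SecondWinsRAV (S : Set G) : Prop :=
  ∃ τ : Strategy G, ∀ σ : Strategy G, RavWins S 1 σ τ

end RelatorGames

/-!
All letters lie outside `H`, so the walk alternates between `H` and its complement. Player 2
answers Player 1's first move `a` by stepping to some `x ∈ H` with `x ≠ 1`, and answers Player 1's
second move `b` by stepping back to the identity, closing the cycle `1, a, x, x * b`. No earlier
move closes a cycle: revisiting a vertex would need `b = 1`, a vertex of the wrong coset, or
`x * b = a`, which is Player 1 backtracking.
-/

namespace RelatorGames

variable {G : Type*} [Group G]

@[simp] lemma eval_nil : eval ([] : List G) = 1 := rfl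

@[simp] lemma eval_cons (m : G) (h : List G) : eval (m :: h) = eval h * m := by
  simp [eval]

lemma closesCycle_iff {h : List G} {m : G} :
    ClosesCycle h m ↔ ∃ t ∈ h.tails, eval t = eval h * m := by
  simp [ClosesCycle, List.mem_tails]

lemma legalMove_compl_iff {H : Subgroup G} {h : List G} {m : G} :
    LegalMove {g | g ∉ H} h m ↔ m ∉ H ∧ ∀ p ∈ h.head?, m ≠ p⁻¹ := by
  simp [LegalMove, letters]

/-- The letter `(eval h)⁻¹ * w` moves the walk from `eval h` to `w`. -/
def detourTo (x : G) : Strategy G := fun h => (eval h)⁻¹ * if h.length = 1 then x else 1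

section Play

variable {H : Subgroup G} {x : G} {σ : Strategy G}

lemma ok_detourTo_zero (ha : σ [] ∉ H) : Ok {g | g ∉ H} σ (detourTo x) 0 := by
  refine ⟨legalMove_compl_iff.2 ⟨ha, by simp [hist]⟩, fun hc => ?_⟩
  obtain ⟨t, ht, heq⟩ := closesCycle_iff.1 hc
  simp only [hist, List.tails, List.mem_singleton] at ht
  subst ht
  simp only [eval_nil, hist, moveAt, Nat.zero_mod, ↓reduceIte, one_mul] at heq
  exact ha (heq ▸ H.one_mem)

lemma ok_detourTo_one (ha : σ [] ∉ H) (hxH : x ∈ H) (hx1 : x ≠ 1) :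
    Ok {g | g ∉ H} σ (detourTo x) 1 := by
  have hmove : moveAt σ (detourTo x) 1 = (σ [])⁻¹ * x := by simp [moveAt, detourTo, hist]
  refine ⟨legalMove_compl_iff.2 ⟨?_, by simp [hmove, hist, hx1]⟩, fun hc => ?_⟩
  · rwa [hmove, Subgroup.mul_mem_cancel_right _ hxH, inv_mem_iff]
  · obtain ⟨t, ht, heq⟩ := closesCycle_iff.1 hc
    simp only [hist, List.tails, List.mem_cons, List.not_mem_nil, or_false] at ht
    rcases ht with rfl | rfl <;>
      simp only [hist, Nat.zero_mod, ↓reduceIte, hmove, eval_cons, eval_nil, one_mul,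
        mul_inv_cancel_left] at heq
    · exact ha (heq ▸ hxH)
    · exact hx1 heq.symm

lemma hist_detourTo_two : hist σ (detourTo x) 2 = [(σ [])⁻¹ * x, σ []] := by
  simp [hist, detourTo]

lemma ok_detourTo_two (hxH : x ∈ H)
    (hb : LegalMove {g | g ∉ H} (hist σ (detourTo x) 2) (moveAt σ (detourTo x) 2)) :
    Ok {g | g ∉ H} σ (detourTo x) 2 := by
  refine ⟨hb, fun hc => ?_⟩
  obtain ⟨hbH, hback⟩ := legalMove_compl_iff.1 hb
  obtain ⟨t, ht, heq⟩ := closesCycle_iff.1 hc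
  rw [hist_detourTo_two] at ht heq hback
  simp only [List.tails, List.mem_cons, List.not_mem_nil, or_false] at ht
  rcases ht with rfl | rfl | rfl <;>
    simp only [eval_cons, eval_nil, one_mul, mul_inv_cancel_left, left_eq_mul] at heq
  · exact hbH (heq ▸ H.one_mem)
  · exact hback _ rfl (by rw [heq]; group)
  · exact hbH ((Subgroup.mul_mem_cancel_left H hxH).1 (heq ▸ H.one_mem))

lemma closesCycle_detourTo_three (hxH : x ∈ H) (hx1 : x ≠ 1)
    (hb : LegalMove {g | g ∉ H} (hist σ (detourTo x) 2) (moveAt σ (detourTo x) 2)) :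
    LegalMove {g | g ∉ H} (hist σ (detourTo x) 3) (moveAt σ (detourTo x) 3) ∧
      ClosesCycle (hist σ (detourTo x) 3) (moveAt σ (detourTo x) 3) := by
  obtain ⟨hbH, -⟩ := legalMove_compl_iff.1 hb
  set b := moveAt σ (detourTo x) 2
  have hhist : hist σ (detourTo x) 3 = [b, (σ [])⁻¹ * x, σ []] := by
    rw [← hist_detourTo_two]; rfl
  have hmove : moveAt σ (detourTo x) 3 = (x * b)⁻¹ := by
    simp [moveAt, detourTo, hhist]
  refine ⟨legalMove_compl_iff.2 ⟨?_, ?_⟩, closesCycle_iff.2 ⟨[], by simp, ?_⟩⟩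
  · rwa [hmove, inv_mem_iff, Subgroup.mul_mem_cancel_left _ hxH]
  · simpa [hhist, hmove] using hx1
  · simp [hhist, hmove]

end Play

theorem secondWinsREL_compl_of_ne_bot {H : Subgroup G} (hH : H ≠ ⊥) :
    SecondWinsREL {g : G | g ∉ H} := by
  obtain ⟨x, hxH, hx1⟩ := H.bot_or_exists_ne_one.resolve_left hH
  refine ⟨detourTo x, fun σ => ?_⟩
  by_cases ha : σ [] ∈ H
  · exact ⟨0, by simp, Or.inr ⟨by decide, fun h => (legalMove_compl_iff.1 h).1 ha⟩⟩
  by_cases hb : LegalMove {g | g ∉ H} (hist σ (detourTo x) 2) (moveAt σ (detourTo x) 2)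
  · refine ⟨3, fun j hj => ?_, Or.inl ⟨rfl, closesCycle_detourTo_three hxH hx1 hb⟩⟩
    interval_cases j
    exacts [ok_detourTo_zero ha, ok_detourTo_one ha hxH hx1, ok_detourTo_two hxH hb]
  · refine ⟨2, fun j hj => ?_, Or.inr ⟨by decide, hb⟩⟩
    interval_cases j
    exacts [ok_detourTo_zero ha, ok_detourTo_one ha hxH hx1]

end RelatorGames

open RelatorGames in
theorem rel_complete_bipartite_second_wins_general {G : Type*} [Group G] [Fintype G]
    (n : ℕ) (hn : 2 ≤ n) (hcard : Fintype.card G = 2 * n)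
    (S : Set G)
    (H : Subgroup G) (hH : H.index = 2) (hS : S = {g : G | g ∉ H}) :
    SecondWinsREL S := by
  subst hS
  refine secondWinsREL_compl_of_ne_bot fun hbot => ?_
  rw [hbot, Subgroup.index_bot, Nat.card_eq_fintype_card, hcard] at hH
  omega

open RelatorGames in
/-- If `G` has order `2n` with `n ≥ 2` and `S = G \\ H` for an index-2
subgroup `H` (so the Cayley graph is complete bipartite), then Player 2 wins
`REL(G,S)`. -/
theorem rel_complete_bipartite_second_wins {G : Type*} [Group G] [Fintype G]
    (n : ℕ) (hn : 2 ≤ n) (hcard : Fintype.card G = 2 * n)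
    (S : Set G) (hgen : Subgroup.closure S = ⊤)
    (H : Subgroup G) (hH : H.index = 2) (hS : S = {g : G | g ∉ H}) :
    SecondWinsREL S :=
  rel_complete_bipartite_second_wins_general n hn hcard S H hH hS
end

section
/- For the dicyclic group with triangle presentation Dic_n = ⟨a,b,c | a^n = b^2 = c^2 = abc⟩, Player 1 has a winning strategy for RAV(Dic_n, {a,b,c}). -/
namespace RavDicAux

open RelatorGames QuaternionGroup

variable {G : Type*} [Group G]

lemma eval_cons (m : G) (h : List G) : eval (m :: h) = eval h * m := by
  simp [eval]

lemma hist_succ (σ τ : Strategy G) (k : ℕ) :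
    hist σ τ (k + 1) = moveAt σ τ k :: hist σ τ k := rfl

lemma hist_suffix (σ τ : Strategy G) {i k : ℕ} (h : i ≤ k) :
    hist σ τ i <:+ hist σ τ k := by
  induction k with
  | zero => simp_all
  | succ k ih =>
      rcases Nat.lt_or_ge i (k + 1) with h' | h'
      · exact (ih (Nat.lt_succ_iff.mp h')).trans (List.suffix_cons _ _)
      · have : i = k + 1 := le_antisymm h h'
        subst this; exact List.suffix_rfl

lemma suffix_hist (σ τ : Strategy G) {t : List G} {k : ℕ} (h : t <:+ hist σ τ k) :
    ∃ i ≤ k, t = hist σ τ i := by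
  induction k with
  | zero => exact ⟨0, le_refl _, List.suffix_nil.mp h⟩
  | succ k ih =>
      rw [hist_succ, List.suffix_cons_iff] at h
      rcases h with h | h
      · exact ⟨k + 1, le_refl _, h⟩
      · obtain ⟨i, hi, ht⟩ := ih h
        exact ⟨i, hi.trans (Nat.le_succ _), ht⟩

/-- If no step before `k` closed a cycle, the visited vertices are pairwise distinct. -/
lemma vtx_ne {S : Set G} {σ τ : Strategy G} {k : ℕ} (hOk : ∀ j < k, Ok S σ τ j)
    {i j : ℕ} (hij : i < j) (hjk : j ≤ k) :
    eval (hist σ τ i) ≠ eval (hist σ τ j) := by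
  intro heq
  obtain ⟨j', rfl⟩ : ∃ j', j = j' + 1 := ⟨j - 1, by omega⟩
  refine (hOk j' (by omega)).2 ⟨hist σ τ i, hist_suffix σ τ (by omega), ?_⟩
  rw [← hist_succ]
  exact heq

variable {n : ℕ}

/-- The matching letter: from an `a`-vertex play `b = (xa 0)⁻¹ = xa n`, from an
`xa`-vertex play `b⁻¹ = xa 0`. -/
def pl (n : ℕ) : QuaternionGroup n → QuaternionGroup n
  | .a _ => .xa (n : ZMod (2 * n))
  | .xa _ => .xa 0

/-- The matched partner of a vertex. -/
def partner (n : ℕ) (v : QuaternionGroup n) : QuaternionGroup n := v * pl n v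

lemma partner_a (i : ZMod (2 * n)) : partner n (a i) = xa ((n : ZMod (2 * n)) - i) := by
  simp [partner, pl]

lemma partner_xa (i : ZMod (2 * n)) : partner n (xa i) = a ((n : ZMod (2 * n)) - i) := by
  simp [partner, pl]

lemma partner_partner (v : QuaternionGroup n) : partner n (partner n v) = v := by
  cases v with
  | a i => rw [partner_a, partner_xa]; ring_nf
  | xa i => rw [partner_xa, partner_a]; ring_nf

lemma partner_ne (v : QuaternionGroup n) : partner n v ≠ v := by
  cases v with
  | a i => rw [partner_a]; simp
  | xa i => rw [partner_xa]; simp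

lemma xa_zero_inv : ((xa 0 : QuaternionGroup n))⁻¹ = xa (n : ZMod (2 * n)) := by
  apply inv_eq_of_mul_eq_one_right
  rw [xa_mul_xa, one_def]
  congr 1
  have : ((2 * n : ℕ) : ZMod (2 * n)) = 0 := ZMod.natCast_self _
  push_cast at this
  linear_combination this

/-- The set of generators in the statement. -/
def Sgen (n : ℕ) : Set (QuaternionGroup n) :=
  {QuaternionGroup.a 1, (QuaternionGroup.xa 0)⁻¹,
    QuaternionGroup.a 1 * (QuaternionGroup.xa 0)⁻¹}

lemma pl_mem_letters (v : QuaternionGroup n) : pl n v ∈ letters (Sgen n) := by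
  cases v with
  | a i =>
      left
      show (xa (n : ZMod (2 * n)) : QuaternionGroup n) ∈ Sgen n
      right; left
      rw [xa_zero_inv]
  | xa i =>
      right
      exact ⟨(xa 0 : QuaternionGroup n)⁻¹, Or.inr (Or.inl rfl), inv_inv _⟩

/-- Player 1's strategy: always move to the matched partner of the current vertex. -/
def sigma (n : ℕ) : Strategy (QuaternionGroup n) := fun h => pl n (eval h)

lemma moveAt_even (τ : Strategy (QuaternionGroup n)) {k : ℕ} (hk : k % 2 = 0) :
    moveAt (sigma n) τ k = pl n (eval (hist (sigma n) τ k)) := by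
  simp [moveAt, hk, sigma]

lemma vtx_even_succ (τ : Strategy (QuaternionGroup n)) {k : ℕ} (hk : k % 2 = 0) :
    eval (hist (sigma n) τ (k + 1)) = partner n (eval (hist (sigma n) τ k)) := by
  rw [hist_succ, eval_cons, moveAt_even τ hk, partner]

/-- At Player 1's turn, the partner of the current vertex has not been visited. -/
lemma partner_not_visited (τ : Strategy (QuaternionGroup n)) {k : ℕ} (hk : k % 2 = 0)
    (hOk : ∀ j < k, Ok (Sgen n) (sigma n) τ j) :
    ∀ i ≤ k, partner n (eval (hist (sigma n) τ k)) ≠ eval (hist (sigma n) τ i) := by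
  intro i hik heq
  rcases eq_or_lt_of_le hik with rfl | hik
  · exact partner_ne _ heq
  · rcases Nat.even_or_odd i with ⟨s, hs⟩ | ⟨s, hs⟩
    · have h1 : eval (hist (sigma n) τ (i + 1)) = eval (hist (sigma n) τ k) := by
        rw [vtx_even_succ τ (by omega), ← heq, partner_partner]
      have hlt : i + 1 < k := by omega
      exact vtx_ne hOk hlt (le_refl _) h1
    · obtain ⟨i', rfl⟩ : ∃ i', i = i' + 1 := ⟨i - 1, by omega⟩
      have h1 : eval (hist (sigma n) τ (i' + 1)) = partner n (eval (hist (sigma n) τ i')) :=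
        vtx_even_succ τ (by omega)
      have h2 : eval (hist (sigma n) τ k) = eval (hist (sigma n) τ i') := by
        have := congrArg (partner n) (heq.trans h1)
        rwa [partner_partner, partner_partner] at this
      exact vtx_ne hOk (by omega) (le_refl _) h2.symm

/-- Player 1's move is always fine. -/
lemma ok_even (τ : Strategy (QuaternionGroup n)) {k : ℕ} (hk : k % 2 = 0)
    (hOk : ∀ j < k, Ok (Sgen n) (sigma n) τ j) :
    Ok (Sgen n) (sigma n) τ k := by
  have hmove : eval (moveAt (sigma n) τ k :: hist (sigma n) τ k) =
      partner n (eval (hist (sigma n) τ k)) := by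
    rw [eval_cons, moveAt_even τ hk, partner]
  constructor
  · constructor
    · rw [moveAt_even τ hk]; exact pl_mem_letters _
    · intro p hp hcontra
      obtain ⟨k', rfl⟩ : ∃ k', k = k' + 1 := by
        cases k with
        | zero => simp [RelatorGames.hist] at hp
        | succ k' => exact ⟨k', rfl⟩
      rw [hist_succ] at hp
      simp only [List.head?_cons, Option.mem_some_iff] at hp
      subst hp
      apply partner_not_visited τ hk hOk k' (Nat.le_succ _)
      rw [← hmove, hcontra, eval_cons, hist_succ, eval_cons, mul_inv_cancel_right]
  · rintro ⟨t, hsuff, hev⟩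
    obtain ⟨i, hik, rfl⟩ := suffix_hist _ _ hsuff
    exact partner_not_visited τ hk hOk i hik (hmove ▸ hev.symm)

end RavDicAux

open RelatorGames in
/-- For the dicyclic group with triangle presentation
`⟨a,b,c | aⁿ = b² = c² = abc⟩` (realized inside `Dic_n` via `b = x⁻¹`, `c = a x⁻¹`),
Player 1 has a winning strategy for `RAV(Dic_n, {a,b,c})`. -/
theorem rav_dicyclic_three_generators (n : ℕ) (hn : 2 ≤ n) :
    FirstWinsRAV
      ({QuaternionGroup.a 1, (QuaternionGroup.xa 0)⁻¹,
          QuaternionGroup.a 1 * (QuaternionGroup.xa 0)⁻¹} : Set (QuaternionGroup n)) := by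
  classical
  haveI : NeZero n := ⟨by omega⟩
  have hSgen : ({QuaternionGroup.a 1, (QuaternionGroup.xa 0)⁻¹,
      QuaternionGroup.a 1 * (QuaternionGroup.xa 0)⁻¹} : Set (QuaternionGroup n)) =
      RavDicAux.Sgen n := rfl
  rw [hSgen]
  refine ⟨RavDicAux.sigma n, fun τ => ?_⟩
  have hbad : ∃ k, ¬ Ok (RavDicAux.Sgen n) (RavDicAux.sigma n) τ k := by
    by_contra hcon
    push_neg at hcon
    have hinj : Function.Injective
        (fun k => eval (hist (RavDicAux.sigma n) τ k)) := by
      intro i j hij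
      by_contra hne
      rcases Nat.lt_or_ge i j with h | h
      · exact RavDicAux.vtx_ne (k := j) (fun j' _ => hcon j') h (le_refl _) hij
      · have h' : j < i := by omega
        exact RavDicAux.vtx_ne (k := i) (fun j' _ => hcon j') h' (le_refl _) hij.symm
    obtain ⟨x, y, hxy, hfxy⟩ :=
      Finite.exists_ne_map_eq_of_infinite (fun k => eval (hist (RavDicAux.sigma n) τ k))
    exact hxy (hinj hfxy)
  refine ⟨Nat.find hbad, fun j hj => not_not.mp (Nat.find_min hbad hj), ?_, ?_⟩
  · intro hk
    exact Nat.find_spec hbad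
      (RavDicAux.ok_even τ hk (fun j hj => not_not.mp (Nat.find_min hbad hj)))
  · have := Nat.find_spec hbad
    unfold Ok at this
    tauto
end
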